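/- arXiv:2503.15053 — 3 statements merged into one kernel-verified Lean document; each statement's English description precedes it below -/
import Mathlib

section
/- Consider the shifted shuffle on permutations: for ρ ∈ S_m and σ ∈ S_n, ρ ⧢ σ is the set of permutations of S_{m+n} whose first m values (i.e., the values 1,...,m) appear in the same relative order as ρ and whose last n values (the values m+1,...,m+n) appear in the same relative order as σ (shifted by m). Let ≡ and ≡' be congruences on S_m and S_n given by arc ideals, and let ≡'' be a congruence on S_{m+n} whose arc ideal restricted to arcs with both endpoints in [m] equals that of ≡, and restricted to arcs with both endpoints in [m+n]∖[m] equals the shift by m of that of ≡'. Then for any congruence classes R of S_m/≡ and S of S_n/≡', the set R ⧢ S = ∪_{ρ∈R, σ∈S} ρ ⧢ σ is a disjoint union of congruence classes of S_{m+n}/≡''. -/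
/-!
A permutation `π` of `[m+k]` lies in `ρ ⧢ σ` exactly when `ρ` and `σ` are the patterns of the
subwords of `π` formed by the values of `[m]` and of `[m+k] ∖ [m]`. A generating step of `≡''`
exchanges two adjacent entries `u < v` of `π` along an arc of `I''`. If `u` and `v` lie in the
same block, the arc restricts to an arc of `I` (or of the shifted `I'`) and the pattern of that
block undergoes the corresponding exchange, a step of `≡` (or `≡'`); if they lie in different
blocks, both patterns are unchanged. So the union of the shuffles of two classes is closed under
`≡''`.
-/

/-- An arc `(a, b, A, B)` on `[n]`: endpoints `a < b` and a partition
`A ⊔ B` of the open interval `]a, b[`. -/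
structure Arc (n : ℕ) where
  a : Fin n
  b : Fin n
  A : Finset (Fin n)
  B : Finset (Fin n)
  hab : a < b
  hdisj : Disjoint A B
  hunion : A ∪ B = Finset.Ioo a b

/-- `Subarc α β` : `α` is a subarc of `β`. -/
def Subarc {n : ℕ} (α β : Arc n) : Prop :=
  β.a ≤ α.a ∧ α.b ≤ β.b ∧ α.A ⊆ β.A ∧ α.B ⊆ β.B

/-- An arc ideal: a lower set for the subarc order. -/
def IsArcIdeal {n : ℕ} (I : Set (Arc n)) : Prop :=
  ∀ α β : Arc n, Subarc α β → β ∈ I → α ∈ I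

/-- An ideal is essential when it contains all basic arcs `(i, i+1, ∅, ∅)`. -/
def EssentialIdeal {n : ℕ} (I : Set (Arc n)) : Prop :=
  ∀ α : Arc n, (α.b : ℕ) = (α.a : ℕ) + 1 → α ∈ I

/-- `α` is a subarc-minimal arc of the complement of `I`. -/
def MinNonArc {n : ℕ} (I : Set (Arc n)) (α : Arc n) : Prop :=
  α ∉ I ∧ ∀ β : Arc n, Subarc β α → β ∉ I → β = α

/-- An ideal is simple when all subarc-minimal arcs of its complement are
up arcs (`B = ∅`) or down arcs (`A = ∅`). -/
def SimpleIdeal {n : ℕ} (I : Set (Arc n)) : Prop :=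
  ∀ α : Arc n, MinNonArc I α → α.B = ∅ ∨ α.A = ∅

/-- `σ` and `τ` differ by the exchange of the values at two consecutive positions
`p, p+1` with ascending values in `σ`, and the arc recording this exchange lies in
the arc ideal `I` (so that `σ ≡ τ`). Congruence is the equivalence closure. -/
def adjCongr {n : ℕ} (I : Set (Arc n)) (σ τ : Equiv.Perm (Fin n)) : Prop :=
  ∃ p q : Fin n, (q : ℕ) = (p : ℕ) + 1 ∧ σ p < σ q ∧ τ = σ * Equiv.swap p q ∧
    ∃ α ∈ I, α.a = σ p ∧ α.b = σ q ∧
      α.A = (Finset.Ioo (σ p) (σ q)).filter (fun v => σ.symm v < p) ∧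
      α.B = (Finset.Ioo (σ p) (σ q)).filter (fun v => q < σ.symm v)

/-- `π` belongs to the shifted shuffle `ρ ⧢ σ`: the values `1, …, m` of `π` appear
in the same relative order as in `ρ`, and the values `m+1, …, m+k` appear in the
same relative order as in `σ` (shifted by `m`). -/
def inShuffle {m k : ℕ} (ρ : Equiv.Perm (Fin m)) (σ : Equiv.Perm (Fin k))
    (π : Equiv.Perm (Fin (m + k))) : Prop :=
  (∀ i j : Fin m, i < j →
    π.symm (Fin.castAdd k (ρ i)) < π.symm (Fin.castAdd k (ρ j))) ∧
  (∀ i j : Fin k, i < j →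
    π.symm (Fin.natAdd m (σ i)) < π.symm (Fin.natAdd m (σ j)))

open Equiv

theorem Equiv.Perm.mul_swap_symm_apply {α : Type*} [DecidableEq α] (π : Perm α) (p q w : α) :
    (π * swap p q).symm w = swap p q (π.symm w) := by
  rw [symm_apply_eq, Perm.mul_apply, swap_apply_self, apply_symm_apply]

namespace Fin

theorem swap_lt_swap_of_val_eq_succ {n : ℕ} {p q c d : Fin n} (hq : (q : ℕ) = p + 1)
    (hcd : c < d) (h : ¬(c = p ∧ d = q)) : swap p q c < swap p q d := by
  simp only [swap_apply_def]
  split_ifs <;> grind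

theorem val_eq_succ_of_strictMono {a b : ℕ} {f : Fin a → Fin b} (hf : StrictMono f)
    {s t : Fin a} (h : (f t : ℕ) = f s + 1) : (t : ℕ) = s + 1 := by
  have hst : s < t := hf.lt_iff_lt.mp (Fin.lt_def.mpr (by omega))
  by_contra hne
  have hr : (s : ℕ) + 1 < a := by omega
  have h₁ := hf (show s < ⟨s + 1, hr⟩ from Fin.lt_def.mpr (by simp))
  have h₂ := hf (show (⟨s + 1, hr⟩ : Fin a) < t from Fin.lt_def.mpr (by simp; omega))
  simp only [Fin.lt_def] at h₁ h₂
  omega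

theorem mem_range_castAddOrderEmb {m k : ℕ} {x : Fin (m + k)} :
    x ∈ Set.range (castAddOrderEmb k) ↔ (x : ℕ) < m :=
  ⟨fun ⟨u, hu⟩ => hu ▸ u.isLt, fun h => ⟨castLT x h, castAdd_castLT k x h⟩⟩

theorem mem_range_natAddOrderEmb {m k : ℕ} {x : Fin (m + k)} :
    x ∈ Set.range (natAddOrderEmb (m := k) m) ↔ m ≤ (x : ℕ) := by
  change x ∈ Set.range (natAdd m) ↔ _
  rw [range_natAdd]
  rfl

end Fin

section SwapArc

variable {n : ℕ}

def IsSwapArc (π : Perm (Fin n)) (p q : Fin n) (α : Arc n) : Prop :=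
  α.a = min (π p) (π q) ∧ α.b = max (π p) (π q) ∧
    α.A = (Finset.Ioo α.a α.b).filter (fun v => π.symm v < p) ∧
    α.B = (Finset.Ioo α.a α.b).filter (fun v => q < π.symm v)

theorem IsSwapArc.mul_swap {π : Perm (Fin n)} {p q : Fin n} {α : Arc n}
    (h : IsSwapArc π p q α) : IsSwapArc (π * swap p q) p q α := by
  obtain ⟨ha, hb, hA, hB⟩ := h
  have hsymm : ∀ w ∈ Finset.Ioo α.a α.b, (π * swap p q).symm w = π.symm w := by
    intro w hw
    rw [Finset.mem_Ioo, ha, hb] at hw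
    rw [Perm.mul_swap_symm_apply]
    refine swap_apply_of_ne_of_ne ?_ ?_ <;> intro he <;> rw [symm_apply_eq] at he <;>
      subst he <;> grind
  refine ⟨?_, ?_, hA.trans (Finset.filter_congr fun w hw => by rw [hsymm w hw]),
    hB.trans (Finset.filter_congr fun w hw => by rw [hsymm w hw])⟩
  · simp [ha, min_comm]
  · simp [hb, max_comm]

/-- The symmetric form of `adjCongr`: the swapped values may be in either order. -/
def swapCongr (I : Set (Arc n)) (π π' : Perm (Fin n)) : Prop :=
  ∃ p q : Fin n, (q : ℕ) = p + 1 ∧ π' = π * swap p q ∧ ∃ α ∈ I, IsSwapArc π p q α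

theorem swapCongr.symm {I : Set (Arc n)} {π π' : Perm (Fin n)} (h : swapCongr I π π') :
    swapCongr I π' π := by
  obtain ⟨p, q, hq, rfl, α, hαI, hα⟩ := h
  exact ⟨p, q, hq, (mul_swap_mul_self p q π).symm, α, hαI, hα.mul_swap⟩

theorem adjCongr.swapCongr {I : Set (Arc n)} {π π' : Perm (Fin n)} (h : adjCongr I π π') :
    swapCongr I π π' := by
  obtain ⟨p, q, hq, hlt, rfl, α, hαI, ha, hb, hA, hB⟩ := h
  refine ⟨p, q, hq, rfl, α, hαI, ?_, ?_, ?_, ?_⟩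
  · rw [ha, min_eq_left hlt.le]
  · rw [hb, max_eq_right hlt.le]
  · rwa [ha, hb]
  · rwa [ha, hb]

theorem adjCongr_mul_swap_of_isSwapArc {I : Set (Arc n)} {π : Perm (Fin n)} {p q : Fin n}
    {α : Arc n} (hq : (q : ℕ) = p + 1) (hlt : π p < π q) (hαI : α ∈ I)
    (hα : IsSwapArc π p q α) : adjCongr I π (π * swap p q) := by
  obtain ⟨ha, hb, hA, hB⟩ := hα
  rw [min_eq_left hlt.le] at ha
  rw [max_eq_right hlt.le] at hb
  exact ⟨p, q, hq, hlt, rfl, α, hαI, ha, hb, ha ▸ hb ▸ hA, ha ▸ hb ▸ hB⟩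

theorem swapCongr.eqvGen_adjCongr {I : Set (Arc n)} {π π' : Perm (Fin n)}
    (h : swapCongr I π π') : Relation.EqvGen (adjCongr I) π π' := by
  obtain ⟨p, q, hq, rfl, α, hαI, hα⟩ := h
  have hpq : π p ≠ π q := π.injective.ne (Fin.ne_of_val_ne (by omega))
  rcases hpq.lt_or_gt with hlt | hgt
  · exact .rel _ _ (adjCongr_mul_swap_of_isSwapArc hq hlt hαI hα)
  · refine .symm _ _ (.rel _ _ ?_)
    have h := adjCongr_mul_swap_of_isSwapArc hq (by simpa using hgt) hαI hα.mul_swap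
    rwa [mul_swap_mul_self] at h

end SwapArc

section Pattern

variable {n N : ℕ}

/-- `ρ` is the standardization of the subword of `π` formed by the values in the range
of `e`. -/
def IsPattern (e : Fin n ↪o Fin N) (ρ : Perm (Fin n)) (π : Perm (Fin N)) : Prop :=
  StrictMono fun i => π.symm (e (ρ i))

theorem inShuffle_iff {m k : ℕ} {ρ : Perm (Fin m)} {σ : Perm (Fin k)} {π : Perm (Fin (m + k))} :
    inShuffle ρ σ π ↔
      IsPattern (Fin.castAddOrderEmb k) ρ π ∧ IsPattern (Fin.natAddOrderEmb m) σ π :=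
  Iff.rfl

def Arc.IsImage (e : Fin n ↪o Fin N) (β : Arc n) (α : Arc N) : Prop :=
  e β.a = α.a ∧ e β.b = α.b ∧ β.A.image e = α.A ∧ β.B.image e = α.B

variable {e : Fin n ↪o Fin N} {ρ : Perm (Fin n)} {π : Perm (Fin N)}

theorem IsPattern.mul_swap_of_not_mem_range (hρ : IsPattern e ρ π) {p q : Fin N}
    (hq : (q : ℕ) = p + 1) (hpq : ¬(π p ∈ Set.range e ∧ π q ∈ Set.range e)) :
    IsPattern e ρ (π * swap p q) := by
  intro i j hij
  simp only [Perm.mul_swap_symm_apply]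
  refine Fin.swap_lt_swap_of_val_eq_succ hq (hρ hij) fun ⟨hi, hj⟩ => hpq ⟨?_, ?_⟩
  · exact ⟨ρ i, (symm_apply_eq π).mp hi⟩
  · exact ⟨ρ j, (symm_apply_eq π).mp hj⟩

theorem IsPattern.isSwapArc (hρ : IsPattern e ρ π) {p q : Fin N} {s t : Fin n}
    (hs : π.symm (e (ρ s)) = p) (ht : π.symm (e (ρ t)) = q) {α : Arc N} {β : Arc n}
    (hα : IsSwapArc π p q α) (hβ : β.IsImage e α) : IsSwapArc ρ s t β := by
  obtain ⟨ha, hb, hA, hB⟩ := hα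
  obtain ⟨hβa, hβb, hβA, hβB⟩ := hβ
  have hπp : π p = e (ρ s) := by rw [← hs, apply_symm_apply]
  have hπq : π q = e (ρ t) := by rw [← ht, apply_symm_apply]
  have hIoo : ∀ w, e w ∈ Finset.Ioo α.a α.b ↔ w ∈ Finset.Ioo β.a β.b := by
    simp [← hβa, ← hβb]
  have hpos : ∀ w x, π.symm (e w) < π.symm (e (ρ x)) ↔ ρ.symm w < x := fun w x => by
    simpa using hρ.lt_iff_lt (a := ρ.symm w) (b := x)
  have hpos' : ∀ w x, π.symm (e (ρ x)) < π.symm (e w) ↔ x < ρ.symm w := fun w x => by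
    simpa using hρ.lt_iff_lt (a := x) (b := ρ.symm w)
  refine ⟨e.injective ?_, e.injective ?_, ?_, ?_⟩
  · rw [hβa, ha, hπp, hπq, e.monotone.map_min]
  · rw [hβb, hb, hπp, hπq, e.monotone.map_max]
  · ext w
    rw [← e.injective.mem_finset_image, hβA, hA, Finset.mem_filter, Finset.mem_filter, hIoo,
      ← hs, hpos]
  · ext w
    rw [← e.injective.mem_finset_image, hβB, hB, Finset.mem_filter, Finset.mem_filter, hIoo,
      ← ht, hpos']

theorem IsPattern.mul_swap_of_mem_range (hρ : IsPattern e ρ π) {p q : Fin N}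
    (hq : (q : ℕ) = p + 1) (hp : π p ∈ Set.range e) (hq' : π q ∈ Set.range e)
    {α : Arc N} {β : Arc n} (hα : IsSwapArc π p q α) (hβ : β.IsImage e α) :
    ∃ s t : Fin n, (t : ℕ) = s + 1 ∧ IsSwapArc ρ s t β ∧
      IsPattern e (ρ * swap s t) (π * swap p q) := by
  obtain ⟨u, hu⟩ := hp
  obtain ⟨v, hv⟩ := hq'
  have hs : π.symm (e (ρ (ρ.symm u))) = p := by rw [apply_symm_apply, hu, symm_apply_apply]
  have ht : π.symm (e (ρ (ρ.symm v))) = q := by rw [apply_symm_apply, hv, symm_apply_apply]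
  refine ⟨ρ.symm u, ρ.symm v, Fin.val_eq_succ_of_strictMono hρ (by rw [hs, ht, hq]),
    hρ.isSwapArc hs ht hα hβ, ?_⟩
  -- both swaps exchange the same two entries of the subword
  have hfix : ∀ i, (π * swap p q).symm (e ((ρ * swap (ρ.symm u) (ρ.symm v)) i)) =
      π.symm (e (ρ i)) := fun i => by
    rw [Perm.mul_swap_symm_apply, Perm.mul_apply, ← hs, ← ht, hρ.injective.swap_apply,
      swap_apply_self]
  intro i j hij
  simpa only [hfix] using hρ hij

end Pattern

theorem exists_inShuffle_of_swapCongr {m k : ℕ} {I : Set (Arc m)} {I' : Set (Arc k)}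
    {I'' : Set (Arc (m + k))}
    (hI : ∀ α ∈ I'', (α.b : ℕ) < m → ∃ β ∈ I, β.IsImage (Fin.castAddOrderEmb k) α)
    (hI' : ∀ α ∈ I'', m ≤ (α.a : ℕ) → ∃ β ∈ I', β.IsImage (Fin.natAddOrderEmb m) α)
    {ρ : Perm (Fin m)} {σ : Perm (Fin k)} {π π' : Perm (Fin (m + k))}
    (hsh : inShuffle ρ σ π) (h : swapCongr I'' π π') :
    ∃ (ρ' : Perm (Fin m)) (σ' : Perm (Fin k)), Relation.EqvGen (adjCongr I) ρ ρ' ∧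
      Relation.EqvGen (adjCongr I') σ σ' ∧ inShuffle ρ' σ' π' := by
  obtain ⟨p, q, hq, rfl, α, hαI, hα⟩ := h
  obtain ⟨hρ, hσ⟩ := inShuffle_iff.mp hsh
  have ha : (α.a : ℕ) = min (π p : ℕ) (π q) := by rw [hα.1, Fin.coe_min]
  have hb : (α.b : ℕ) = max (π p : ℕ) (π q) := by rw [hα.2.1, Fin.coe_max]
  by_cases hbm : (α.b : ℕ) < m
  · obtain ⟨β, hβI, hβ⟩ := hI α hαI hbm
    obtain ⟨s, t, hst, hβs, hρ'⟩ := hρ.mul_swap_of_mem_range hq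
      (Fin.mem_range_castAddOrderEmb.mpr (by omega))
      (Fin.mem_range_castAddOrderEmb.mpr (by omega)) hα hβ
    exact ⟨_, σ, swapCongr.eqvGen_adjCongr ⟨s, t, hst, rfl, β, hβI, hβs⟩, .refl σ, hρ',
      hσ.mul_swap_of_not_mem_range hq (by simp only [Fin.mem_range_natAddOrderEmb]; omega)⟩
  by_cases ham : m ≤ (α.a : ℕ)
  · obtain ⟨β, hβI, hβ⟩ := hI' α hαI ham
    obtain ⟨s, t, hst, hβs, hσ'⟩ := hσ.mul_swap_of_mem_range hq
      (Fin.mem_range_natAddOrderEmb.mpr (by omega))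
      (Fin.mem_range_natAddOrderEmb.mpr (by omega)) hα hβ
    exact ⟨ρ, _, .refl ρ, swapCongr.eqvGen_adjCongr ⟨s, t, hst, rfl, β, hβI, hβs⟩,
      hρ.mul_swap_of_not_mem_range hq (by simp only [Fin.mem_range_castAddOrderEmb]; omega), hσ'⟩
  exact ⟨ρ, σ, .refl ρ, .refl σ,
    hρ.mul_swap_of_not_mem_range hq (by simp only [Fin.mem_range_castAddOrderEmb]; omega),
    hσ.mul_swap_of_not_mem_range hq (by simp only [Fin.mem_range_natAddOrderEmb]; omega)⟩

theorem stmt13_general {m k : ℕ} (I : Set (Arc m)) (I' : Set (Arc k)) (I'' : Set (Arc (m + k)))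
    (hRestr1 : ∀ α : Arc (m + k), (α.b : ℕ) < m →
      (α ∈ I'' ↔ ∃ β : Arc m, β ∈ I ∧ (β.a : ℕ) = (α.a : ℕ) ∧ (β.b : ℕ) = (α.b : ℕ) ∧
        β.A.image (Fin.castAdd k) = α.A ∧ β.B.image (Fin.castAdd k) = α.B))
    (hRestr2 : ∀ α : Arc (m + k), m ≤ (α.a : ℕ) →
      (α ∈ I'' ↔ ∃ β : Arc k, β ∈ I' ∧ (β.a : ℕ) + m = (α.a : ℕ) ∧
        (β.b : ℕ) + m = (α.b : ℕ) ∧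
        β.A.image (Fin.natAdd m) = α.A ∧ β.B.image (Fin.natAdd m) = α.B))
    (ρ₀ : Equiv.Perm (Fin m)) (σ₀ : Equiv.Perm (Fin k))
    (π π' : Equiv.Perm (Fin (m + k)))
    (hπ : ∃ (ρ : Equiv.Perm (Fin m)) (σ : Equiv.Perm (Fin k)),
      Relation.EqvGen (adjCongr I) ρ₀ ρ ∧ Relation.EqvGen (adjCongr I') σ₀ σ ∧
      inShuffle ρ σ π)
    (hππ' : Relation.EqvGen (adjCongr I'') π π') :
    ∃ (ρ : Equiv.Perm (Fin m)) (σ : Equiv.Perm (Fin k)),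
      Relation.EqvGen (adjCongr I) ρ₀ ρ ∧ Relation.EqvGen (adjCongr I') σ₀ σ ∧
      inShuffle ρ σ π' := by
  have hI : ∀ α ∈ I'', (α.b : ℕ) < m → ∃ β ∈ I, β.IsImage (Fin.castAddOrderEmb k) α := by
    intro α hα hbm
    obtain ⟨β, hβ, ha, hb, hA, hB⟩ := (hRestr1 α hbm).mp hα
    exact ⟨β, hβ, Fin.ext ha, Fin.ext hb, hA, hB⟩
  have hI' : ∀ α ∈ I'', m ≤ (α.a : ℕ) → ∃ β ∈ I', β.IsImage (Fin.natAddOrderEmb m) α := by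
    intro α hα ham
    obtain ⟨β, hβ, ha, hb, hA, hB⟩ := (hRestr2 α ham).mp hα
    exact ⟨β, hβ, Fin.ext (by simp only [Fin.natAddOrderEmb_apply, Fin.val_natAdd]; omega),
      Fin.ext (by simp only [Fin.natAddOrderEmb_apply, Fin.val_natAdd]; omega), hA, hB⟩
  let InShuffleOfClasses (π : Perm (Fin (m + k))) : Prop :=
    ∃ (ρ : Perm (Fin m)) (σ : Perm (Fin k)), Relation.EqvGen (adjCongr I) ρ₀ ρ ∧
      Relation.EqvGen (adjCongr I') σ₀ σ ∧ inShuffle ρ σ π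
  have hstep : ∀ π π', swapCongr I'' π π' → InShuffleOfClasses π → InShuffleOfClasses π' := by
    rintro π π' h ⟨ρ, σ, hρ, hσ, hsh⟩
    obtain ⟨ρ', σ', hρρ', hσσ', hsh'⟩ := exists_inShuffle_of_swapCongr hI hI' hsh h
    exact ⟨ρ', σ', hρ.trans _ _ _ hρρ', hσ.trans _ _ _ hσσ', hsh'⟩
  have hiff : adjCongr I'' ≤ fun π π' => InShuffleOfClasses π ↔ InShuffleOfClasses π' :=
    fun π π' h => ⟨hstep π π' h.swapCongr, hstep π' π h.swapCongr.symm⟩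
  have hiffEquiv : Equivalence fun π π' => InShuffleOfClasses π ↔ InShuffleOfClasses π' :=
    ⟨fun _ => Iff.rfl, Iff.symm, Iff.trans⟩
  exact (hiffEquiv.eqvGen_iff.mp (Relation.EqvGen.mono hiff _ _ hππ')).mp hπ

/-- if the arc ideal `I''` on `[m+k]` restricts to `I` on arcs inside
`[m]` and to the shift of `I'` on arcs inside `[m+k] ∖ [m]`, then the shifted
shuffle of a congruence class of `≡_I` with a congruence class of `≡_{I'}` is a
(disjoint) union of congruence classes of `≡_{I''}`, i.e. it is saturated under
the congruence generated by `I''`. -/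
theorem stmt13 {m k : ℕ} (I : Set (Arc m)) (I' : Set (Arc k)) (I'' : Set (Arc (m + k)))
    (hI : IsArcIdeal I) (hI' : IsArcIdeal I') (hI'' : IsArcIdeal I'')
    (hRestr1 : ∀ α : Arc (m + k), (α.b : ℕ) < m →
      (α ∈ I'' ↔ ∃ β : Arc m, β ∈ I ∧ (β.a : ℕ) = (α.a : ℕ) ∧ (β.b : ℕ) = (α.b : ℕ) ∧
        β.A.image (Fin.castAdd k) = α.A ∧ β.B.image (Fin.castAdd k) = α.B))
    (hRestr2 : ∀ α : Arc (m + k), m ≤ (α.a : ℕ) →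
      (α ∈ I'' ↔ ∃ β : Arc k, β ∈ I' ∧ (β.a : ℕ) + m = (α.a : ℕ) ∧
        (β.b : ℕ) + m = (α.b : ℕ) ∧
        β.A.image (Fin.natAdd m) = α.A ∧ β.B.image (Fin.natAdd m) = α.B))
    (ρ₀ : Equiv.Perm (Fin m)) (σ₀ : Equiv.Perm (Fin k))
    (π π' : Equiv.Perm (Fin (m + k)))
    (hπ : ∃ (ρ : Equiv.Perm (Fin m)) (σ : Equiv.Perm (Fin k)),
      Relation.EqvGen (adjCongr I) ρ₀ ρ ∧ Relation.EqvGen (adjCongr I') σ₀ σ ∧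
      inShuffle ρ σ π)
    (hππ' : Relation.EqvGen (adjCongr I'') π π') :
    ∃ (ρ : Equiv.Perm (Fin m)) (σ : Equiv.Perm (Fin k)),
      Relation.EqvGen (adjCongr I) ρ₀ ρ ∧ Relation.EqvGen (adjCongr I') σ₀ σ ∧
      inShuffle ρ σ π' :=
  stmt13_general I I' I'' hRestr1 hRestr2 ρ₀ σ₀ π π' hπ hππ'
end

section
/- Every essential simple congruence of the weak order on S_n arises from a birational sequence: for any finite set of pairwise non-nesting 'essential' up arcs u(a_1,b_1),...,u(a_k,b_k) on [n] (with a_1 < ... < a_k and b_1 < ... < b_k), there exists a sequence r = (r_1,...,r_n) of nonnegative rationals, vanishing outside the open interval (a_1, b_k), such that an up arc u(a,b) satisfies Σ_{a < i < b} r_i > 1 if and only if u(a,b) has some u(a_t,b_t) as a subarc; equivalently, the subarc-minimal up arcs u(a,b) with Σ_{a < i < b} r_i > 1 are exactly u(a_1,b_1),...,u(a_k,b_k). -/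
/-!
Add the arcs one at a time, in order of increasing endpoints, keeping a margin `δ > 0`: every
interval sum is either `> 1` (the interval contains an arc) or `≤ 1 - δ`. For the new arc
`u(c, d)`, put weight `2δ/3` on `c + 1` and top up `d - 1` so that the sum over `(c + 1, d)`
becomes `1 - δ/3`. The earlier weights live left of `d` and the earlier arcs start left of `c`,
so an interval containing `u(c, d)` now has sum `≥ 1 + δ/3`, while an interval containing no
arc either misses `d - 1` (and gains at most `2δ/3`) or starts after `c` (and has sum at most
`1 - δ/3`).
-/

open Finset

section IntervalSums

variable {M : Type*} [AddCommMonoid M] [PartialOrder M] [IsOrderedAddMonoid M] {r : ℕ → M}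

lemma sum_Ioo_mono (hr : ∀ i, 0 ≤ r i) {x y x' y' : ℕ} (hx : x' ≤ x) (hy : y ≤ y') :
    ∑ i ∈ Ioo x y, r i ≤ ∑ i ∈ Ioo x' y', r i :=
  sum_le_sum_of_subset_of_nonneg (Ioo_subset_Ioo hx hy) fun i _ _ => hr i

lemma sum_Ioo_le_of_eq_zero_of_le (hr : ∀ i, 0 ≤ r i) {m : ℕ} (hm : ∀ i, m ≤ i → r i = 0)
    {x y x' : ℕ} (hx : x' ≤ x) : ∑ i ∈ Ioo x y, r i ≤ ∑ i ∈ Ioo x' m, r i :=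
  calc ∑ i ∈ Ioo x y, r i = ∑ i ∈ Ioo x (min y m), r i := by
        refine (sum_subset (Ioo_subset_Ioo le_rfl (min_le_left _ _)) fun i hi hi' => hm i ?_).symm
        simp only [mem_Ioo] at hi hi'
        omega
    _ ≤ ∑ i ∈ Ioo x' m, r i := sum_Ioo_mono hr hx (min_le_right _ _)

end IntervalSums

lemma sum_add_single_add_single {ι M : Type*} [DecidableEq ι] [AddCommMonoid M] (s : Finset ι)
    (f : ι → M) (p q : ι) (v w : M) :
    ∑ i ∈ s, (f + Pi.single p v + Pi.single q w : ι → M) i =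
      ∑ i ∈ s, f i + (if p ∈ s then v else 0) + (if q ∈ s then w else 0) := by
  simp only [Pi.add_apply, sum_add_distrib, sum_pi_single']

structure RealizesArcs {k : ℕ} (a b : Fin k → ℕ) (δ : ℚ) (r : ℕ → ℚ) : Prop where
  nonneg : ∀ i, 0 ≤ r i
  exists_mem_of_ne_zero : ∀ i, r i ≠ 0 → ∃ t, a t < i ∧ i < b t
  one_lt_sum_of_covers : ∀ x y, (∃ t, x ≤ a t ∧ b t ≤ y) → 1 < ∑ i ∈ Ioo x y, r i
  sum_le_of_not_covers : ∀ x y, (¬∃ t, x ≤ a t ∧ b t ≤ y) → ∑ i ∈ Ioo x y, r i ≤ 1 - δ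

namespace RealizesArcs

lemma of_fin_zero (a b : Fin 0 → ℕ) : RealizesArcs a b 1 0 where
  nonneg _ := le_rfl
  exists_mem_of_ne_zero _ h := absurd rfl h
  one_lt_sum_of_covers _ _ := fun ⟨t, _⟩ => t.elim0
  sum_le_of_not_covers _ _ _ := by simp

variable {δ : ℚ} {r : ℕ → ℚ}

lemma eq_zero_of_forall_le {k : ℕ} {a b : Fin k → ℕ} (h : RealizesArcs a b δ r) {i : ℕ}
    (hi : ∀ t, b t ≤ i) : r i = 0 := by
  by_contra hri
  obtain ⟨t, -, hit⟩ := h.exists_mem_of_ne_zero i hri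
  exact (hi t).not_gt hit

lemma sum_le_of_forall_lt {k : ℕ} {a b : Fin k → ℕ} (h : RealizesArcs a b δ r) {x : ℕ}
    (hx : ∀ t, a t < x) (y : ℕ) : ∑ i ∈ Ioo x y, r i ≤ 1 - δ :=
  h.sum_le_of_not_covers x y fun ⟨t, hxt, _⟩ => (hx t).not_ge hxt

variable {k : ℕ} {a b : Fin (k + 1) → ℕ}

lemma snoc (h : RealizesArcs (a ∘ Fin.castSucc) (b ∘ Fin.castSucc) δ r) (hδ : 0 < δ)
    (ha : StrictMono a) (hb : StrictMono b) (hlen : a (Fin.last k) + 2 ≤ b (Fin.last k)) :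
    RealizesArcs a b (δ / 3)
      (r + Pi.single (a (Fin.last k) + 1) (2 * δ / 3) + Pi.single (b (Fin.last k) - 1)
        (1 - δ / 3 - ∑ i ∈ Ioo (a (Fin.last k) + 1) (b (Fin.last k)), r i)) := by
  set c := a (Fin.last k)
  set d := b (Fin.last k)
  set S := ∑ i ∈ Ioo (c + 1) d, r i
  have ha_lt (t : Fin k) : a t.castSucc < c := ha (Fin.castSucc_lt_last t)
  have hb_lt (t : Fin k) : b t.castSucc < d := hb (Fin.castSucc_lt_last t)
  have hr_zero (i : ℕ) (hi : d ≤ i) : r i = 0 :=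
    h.eq_zero_of_forall_le fun t => (hb_lt t).le.trans hi
  have hS : S ≤ 1 - δ := h.sum_le_of_forall_lt (fun t => (ha_lt t).trans c.lt_succ_self) d
  refine ⟨fun i => ?_, fun i hi => ?_, fun x y hxy => ?_, fun x y hxy => ?_⟩
  · have hv : (0 : ℕ → ℚ) ≤ Pi.single (c + 1) (2 * δ / 3) := Pi.single_nonneg.2 (by positivity)
    have hw : (0 : ℕ → ℚ) ≤ Pi.single (d - 1) (1 - δ / 3 - S) := Pi.single_nonneg.2 (by linarith)
    exact add_nonneg (add_nonneg (h.nonneg i) (hv i)) (hw i)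
  · rw [Fin.exists_fin_succ']
    by_cases hi_last : c < i ∧ i < d
    · exact Or.inr hi_last
    refine Or.inl (h.exists_mem_of_ne_zero i ?_)
    have hic : i ≠ c + 1 := by omega
    have hid : i ≠ d - 1 := by omega
    simpa [Pi.single_apply, hic, hid] using hi
  · rw [sum_add_single_add_single]
    rcases Fin.exists_fin_succ'.1 hxy with hold | ⟨hxc, hdy⟩
    · have := h.one_lt_sum_of_covers x y hold
      split_ifs <;> linarith
    · have hS_le : S ≤ ∑ i ∈ Ioo x y, r i := sum_Ioo_mono h.nonneg (by omega) hdy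
      rw [if_pos (by simp only [mem_Ioo]; omega), if_pos (by simp only [mem_Ioo]; omega)]
      linarith
  · obtain ⟨hold, hlast⟩ := not_or.1 (Fin.exists_fin_succ'.not.1 hxy)
    have hold_le := h.sum_le_of_not_covers x y hold
    rw [sum_add_single_add_single]
    by_cases hd : d - 1 ∈ Ioo x y
    · simp only [mem_Ioo] at hd
      have hc : c + 1 ∉ Ioo x y := by simp only [mem_Ioo]; omega
      have hle_S : ∑ i ∈ Ioo x y, r i ≤ S := sum_Ioo_le_of_eq_zero_of_le h.nonneg hr_zero (by omega)
      rw [if_neg hc, if_pos (mem_Ioo.2 hd)]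
      linarith
    · rw [if_neg hd]
      split_ifs <;> linarith

end RealizesArcs

theorem exists_realizesArcs {k : ℕ} (a b : Fin k → ℕ) (ha : StrictMono a) (hb : StrictMono b)
    (hlen : ∀ t, a t + 2 ≤ b t) : ∃ δ, 0 < δ ∧ ∃ r, RealizesArcs a b δ r := by
  induction k with
  | zero => exact ⟨1, one_pos, 0, .of_fin_zero a b⟩
  | succ k ih =>
    obtain ⟨δ, hδ, r, hr⟩ := ih (a ∘ Fin.castSucc) (b ∘ Fin.castSucc)
      (ha.comp Fin.strictMono_castSucc) (hb.comp Fin.strictMono_castSucc) fun t => hlen _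
    exact ⟨δ / 3, by positivity, _, hr.snoc hδ ha hb (hlen _)⟩

/-- every essential simple congruence arises from a birational
sequence: any family of pairwise non-nesting essential up arcs
`u(a 0, b 0), …, u(a (k-1), b (k-1))` on `[n]` (ordered with both endpoint
sequences increasing) is realized as the family of subarc-minimal up arcs whose
wall-weight sum exceeds `1`, for some sequence of nonnegative rationals vanishing
outside the open interval `(a 0, b (k-1))`. -/
theorem stmt14 (n k : ℕ) (hk : 0 < k) (a b : Fin k → ℕ)
    (hlen : ∀ t, a t + 2 ≤ b t) (hma : StrictMono a) (hmb : StrictMono b) :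
    ∃ r : ℕ → ℚ, (∀ i, 0 ≤ r i) ∧
      (∀ i : ℕ, (i ≤ a ⟨0, hk⟩ ∨ b ⟨k - 1, by omega⟩ ≤ i) → r i = 0) ∧
      (∀ x y : ℕ, 1 ≤ x → y ≤ n → x + 2 ≤ y →
        (1 < ∑ i ∈ Finset.Ioo x y, r i ↔ ∃ t : Fin k, x ≤ a t ∧ b t ≤ y)) := by
  obtain ⟨δ, hδ, r, hr⟩ := exists_realizesArcs a b hma hmb hlen
  refine ⟨r, hr.nonneg, fun i hi => ?_,
    fun x y _ _ _ => ⟨fun hsum => ?_, hr.one_lt_sum_of_covers x y⟩⟩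
  · by_contra hri
    obtain ⟨t, hat, hbt⟩ := hr.exists_mem_of_ne_zero i hri
    have hfirst : a ⟨0, hk⟩ ≤ a t := hma.monotone (Fin.le_iff_val_le_val.2 (Nat.zero_le _))
    have hlast : b t ≤ b ⟨k - 1, by omega⟩ :=
      hmb.monotone (Fin.le_iff_val_le_val.2 (Nat.le_sub_one_of_lt t.isLt))
    omega
  · by_contra hno
    linarith [hr.sum_le_of_not_covers x y hno]
end

section
/- Let S be a Schröder separating tree, let I, J, K be (not necessarily distinct) nodes of S, and suppose there exist i ∈ I, j ∈ J, k ∈ K with i < j < k. If I = K, or I and K are joined by an edge of S, then there is a directed path in S from the node J to the set {I, K} or from {I, K} to the node J (i.e., J is comparable, in the order generated by the directed edges, with I or with K in a consistent direction toward/from the edge I—K). -/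
/-! Follow the path in the tree from `J` towards the edge `I—K`. If it is not directed it has a
turn: a node `M` whose two neighbours `a`, `b` on the path are both its parents or both its
children. Separation at `M` gives `m ∈ M` with `J` on one side and both `I` and `K` on the other,
impossible since `j` lies strictly between `i` and `k`. -/

open Relation Finset

/-- The undirected simple graph underlying a directed edge relation. -/
def dirGraph {α : Type*} (E : α → α → Prop) : SimpleGraph α where
  Adj a b := a ≠ b ∧ (E a b ∨ E b a)
  symm := ⟨fun a b h => ⟨h.1.symm, h.2.symm⟩⟩
  loopless := ⟨fun a h => h.1 rfl⟩

/-- `x` lies in the subtree attached to `p` at `j`: every walk from `x` to `j`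
passes through `p`. -/
def inSub {α : Type*} (E : α → α → Prop) (j p x : α) : Prop :=
  ∀ w : (dirGraph E).Walk x j, p ∈ w.support

def atMostTwo {α : Type*} (s : Set α) : Prop :=
  ∀ a ∈ s, ∀ b ∈ s, ∀ c ∈ s, a = b ∨ a = c ∨ b = c

/-- A separating tree on `[n]`, encoded by its directed edge relation
(`E a b` means there is an edge directed from `a` to `b`, i.e. `b` is a parent of `a`). -/
def IsSepTree {n : ℕ} (E : Fin n → Fin n → Prop) : Prop :=
  (dirGraph E).IsTree ∧
  (∀ j, atMostTwo {p | E j p}) ∧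
  (∀ j, atMostTwo {c | E c j}) ∧
  (∀ j p₁ p₂, E j p₁ → E j p₂ → p₁ ≠ p₂ →
    ∀ x₁ x₂, inSub E j p₁ x₁ → inSub E j p₂ x₂ →
      (x₁ < j ∧ j < x₂) ∨ (x₂ < j ∧ j < x₁)) ∧
  (∀ j c₁ c₂, E c₁ j → E c₂ j → c₁ ≠ c₂ →
    ∀ x₁ x₂, inSub E j c₁ x₁ → inSub E j c₂ x₂ →
      (x₁ < j ∧ j < x₂) ∨ (x₂ < j ∧ j < x₁))
/-- `(P, E)` is a Schröder separating tree on `[n]`: `P` is a set partition of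
`[n]`, `E` is a directed tree structure on the parts of `P`, and any two ancestor
(resp. descendant) subtrees of a node `J` are separated by some integer `j ∈ J`. -/
def IsSchTree {n : ℕ} (P : Finset (Finset (Fin n)))
    (E : Finset (Fin n) → Finset (Fin n) → Prop) : Prop :=
  (∀ J ∈ P, J.Nonempty) ∧
  (∀ x : Fin n, ∃! J, J ∈ P ∧ x ∈ J) ∧
  (∀ J K, E J K → J ∈ P ∧ K ∈ P) ∧
  (∀ J ∈ P, ∀ K ∈ P, (dirGraph E).Reachable J K) ∧
  (dirGraph E).IsAcyclic ∧
  (∀ J P₁ P₂, E J P₁ → E J P₂ → P₁ ≠ P₂ →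
    ∃ j ∈ J, ((∀ L ∈ P, inSub E J P₁ L → ∀ x ∈ L, x < j) ∧
              (∀ R ∈ P, inSub E J P₂ R → ∀ y ∈ R, j < y)) ∨
             ((∀ L ∈ P, inSub E J P₁ L → ∀ x ∈ L, j < x) ∧
              (∀ R ∈ P, inSub E J P₂ R → ∀ y ∈ R, y < j))) ∧
  (∀ J C₁ C₂, E C₁ J → E C₂ J → C₁ ≠ C₂ →
    ∃ j ∈ J, ((∀ L ∈ P, inSub E J C₁ L → ∀ x ∈ L, x < j) ∧
              (∀ R ∈ P, inSub E J C₂ R → ∀ y ∈ R, j < y)) ∨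
             ((∀ L ∈ P, inSub E J C₁ L → ∀ x ∈ L, j < x) ∧
              (∀ R ∈ P, inSub E J C₂ R → ∀ y ∈ R, y < j)))

/-- Relabeling of nodes after contracting the edge `J₀ → J₁`. -/
def contractNode {n : ℕ} (J₀ J₁ X : Finset (Fin n)) : Finset (Fin n) :=
  if X = J₀ ∨ X = J₁ then J₀ ∪ J₁ else X

/-- The parts after contracting the edge `J₀ → J₁`. -/
def contractParts {n : ℕ} (P : Finset (Finset (Fin n))) (J₀ J₁ : Finset (Fin n)) :
    Finset (Finset (Fin n)) :=
  insert (J₀ ∪ J₁) ((P.erase J₀).erase J₁)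

/-- The edge relation after contracting the edge `J₀ → J₁`. -/
def contractEdge {n : ℕ} (E : Finset (Fin n) → Finset (Fin n) → Prop)
    (J₀ J₁ : Finset (Fin n)) (X Y : Finset (Fin n)) : Prop :=
  ∃ X₀ Y₀, E X₀ Y₀ ∧ ¬(X₀ = J₀ ∧ Y₀ = J₁) ∧
    X = contractNode J₀ J₁ X₀ ∧ Y = contractNode J₀ J₁ Y₀

open SimpleGraph SimpleGraph.Walk Function

section Walks

variable {α : Type*} {E : α → α → Prop}

theorem isChain_support_cons_iff {R : α → α → Prop} {u w v : α} (h : (dirGraph E).Adj u w)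
    (q : (dirGraph E).Walk w v) :
    (cons h q).support.IsChain R ↔ R u w ∧ q.support.IsChain R := by
  rw [support_cons, ← q.cons_tail_support, List.isChain_cons_cons]

theorem reflTransGen_of_isChain_support {G : SimpleGraph α} {R : α → α → Prop} {u v : α}
    (p : G.Walk u v) (h : p.support.IsChain R) : ReflTransGen R u v := by
  simpa using List.relationReflTransGen_of_exists_isChain p.support h p.support_ne_nil

theorem isChain_support_or_exists_turn {u v : α} (p : (dirGraph E).Walk u v) :
    p.support.IsChain E ∨ p.support.IsChain (swap E) ∨
    ∃ (a M b : α) (hA : (dirGraph E).Adj a M) (hB : (dirGraph E).Adj M b)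
      (q₁ : (dirGraph E).Walk u a) (q₂ : (dirGraph E).Walk b v),
      p = q₁.append (cons hA (cons hB q₂)) ∧ ((E a M ∧ E b M) ∨ (E M a ∧ E M b)) := by
  induction p with
  | nil => exact .inl (List.isChain_singleton _)
  | @cons u w v h q ih =>
    rw [isChain_support_cons_iff, isChain_support_cons_iff]
    rcases ih with hfwd | hbwd | ⟨a, M, b, hA, hB, q₁, q₂, rfl, hturn⟩
    · rcases h.2 with huw | hwu
      · exact .inl ⟨huw, hfwd⟩
      · cases q with
        | nil => exact .inr (.inl ⟨hwu, List.isChain_singleton _⟩)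
        | cons h' q' =>
          exact .inr (.inr ⟨u, w, _, h, h', nil, q', rfl,
            .inr ⟨hwu, ((isChain_support_cons_iff h' q').1 hfwd).1⟩⟩)
    · rcases h.2 with huw | hwu
      · cases q with
        | nil => exact .inl ⟨huw, List.isChain_singleton _⟩
        | cons h' q' =>
          exact .inr (.inr ⟨u, w, _, h, h', nil, q', rfl,
            .inl ⟨huw, ((isChain_support_cons_iff h' q').1 hbwd).1⟩⟩)
      · exact .inr (.inl ⟨hwu, hbwd⟩)
    · exact .inr (.inr ⟨a, M, b, hA, hB, cons h q₁, q₂, rfl, hturn⟩)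

theorem inSub_of_isPath (hac : (dirGraph E).IsAcyclic) {x M c : α}
    {p : (dirGraph E).Walk x M} (hp : p.IsPath) (hc : c ∈ p.support) : inSub E M c x := by
  classical
  intro w
  have hpw : p = w.bypass :=
    congrArg Subtype.val ((hac.subsingleton_path x M).elim ⟨p, hp⟩ w.toPath)
  exact w.support_bypass_subset_support (hpw ▸ hc)

end Walks

namespace IsSchTree

variable {n : ℕ} {P : Finset (Finset (Fin n))} {E : Finset (Fin n) → Finset (Fin n) → Prop}

theorem not_lt_lt_of_turn (hS : IsSchTree P E) {a M b : Finset (Fin n)} (hab : a ≠ b)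
    (hturn : (E a M ∧ E b M) ∨ (E M a ∧ E M b))
    {J X Y : Finset (Fin n)} (hJ : J ∈ P) (hX : X ∈ P) (hY : Y ∈ P)
    (hJa : inSub E M a J) (hXb : inSub E M b X) (hYb : inSub E M b Y)
    {i j k : Fin n} (hi : i ∈ X) (hj : j ∈ J) (hk : k ∈ Y) : ¬(i < j ∧ j < k) := by
  obtain ⟨-, -, -, -, -, hsepParents, hsepChildren⟩ := hS
  obtain ⟨m, -, hsep⟩ : ∃ m ∈ M,
      ((∀ L ∈ P, inSub E M a L → ∀ x ∈ L, x < m) ∧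
        (∀ R ∈ P, inSub E M b R → ∀ y ∈ R, m < y)) ∨
      ((∀ L ∈ P, inSub E M a L → ∀ x ∈ L, m < x) ∧
        (∀ R ∈ P, inSub E M b R → ∀ y ∈ R, y < m)) := by
    rcases hturn with ⟨haM, hbM⟩ | ⟨hMa, hMb⟩
    · exact hsepChildren M a b haM hbM hab
    · exact hsepParents M a b hMa hMb hab
  rintro ⟨hij, hjk⟩
  rcases hsep with ⟨hbelow, habove⟩ | ⟨habove, hbelow⟩
  · exact absurd ((hbelow J hJ hJa j hj).trans (habove X hX hXb i hi)) hij.asymm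
  · exact absurd ((hbelow Y hY hYb k hk).trans (habove J hJ hJa j hj)) hjk.asymm

theorem reflTransGen_of_isPath (hS : IsSchTree P E) {J Q R : Finset (Fin n)}
    (hJ : J ∈ P) (hQ : Q ∈ P) (hR : R ∈ P) {p : (dirGraph E).Walk J R} (hp : p.IsPath)
    (hQp : Q ∈ p.support) {i j k : Fin n} (hi : i ∈ Q ∨ i ∈ R) (hj : j ∈ J)
    (hk : k ∈ Q ∨ k ∈ R) (hij : i < j) (hjk : j < k) :
    ReflTransGen E J Q ∨ ReflTransGen E Q J := by
  rcases isChain_support_or_exists_turn (p.takeUntil Q hQp) with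
    hfwd | hbwd | ⟨a, M, b, hA, hB, q₁, q₂, htake, hturn⟩
  · exact .inl (reflTransGen_of_isChain_support _ hfwd)
  · exact .inr (reflTransGen_swap.mp (reflTransGen_of_isChain_support _ hbwd))
  · exfalso
    have hac := hS.2.2.2.2.1
    have hsplit : (q₁.concat hA).append ((cons hB q₂).append (p.dropUntil Q hQp)) = p := calc
      _ = (q₁.append (cons hA (cons hB q₂))).append (p.dropUntil Q hQp) := by
        simp only [concat_eq_append, ← append_assoc, cons_append, nil_append]
      _ = p := htake ▸ p.take_spec hQp
    have hp' := hsplit ▸ hp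
    have hab : a ≠ b := by
      have hnodup := (htake ▸ hp.takeUntil hQp).of_append_right.support_nodup
      rw [support_cons, List.nodup_cons] at hnodup
      rintro rfl
      exact hnodup.1 (by simp)
    have hJa : inSub E M a J := inSub_of_isPath hac hp'.of_append_left (by simp)
    have hQb : inSub E M b Q := inSub_of_isPath hac hp'.of_append_right.of_append_left.reverse
      (by simp)
    have hRb : inSub E M b R := inSub_of_isPath hac hp'.of_append_right.reverse (by simp)
    obtain ⟨X, hX, hiX, hXb⟩ : ∃ X ∈ P, i ∈ X ∧ inSub E M b X :=
      hi.elim (fun h => ⟨Q, hQ, h, hQb⟩) (fun h => ⟨R, hR, h, hRb⟩)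
    obtain ⟨Y, hY, hkY, hYb⟩ : ∃ Y ∈ P, k ∈ Y ∧ inSub E M b Y :=
      hk.elim (fun h => ⟨Q, hQ, h, hQb⟩) (fun h => ⟨R, hR, h, hRb⟩)
    exact hS.not_lt_lt_of_turn hab hturn hJ hX hY hJa hXb hYb hiX hj hkY ⟨hij, hjk⟩

end IsSchTree

/-- in a Schröder separating tree, if `I`, `J`, `K` are nodes with
`i ∈ I`, `j ∈ J`, `k ∈ K`, `i < j < k`, and `I = K` or `I` and `K` are joined by an
edge, then there is a directed path from `J` to the edge `I—K` or from the edge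
`I—K` to `J`. -/
theorem stmt19 {n : ℕ} (P : Finset (Finset (Fin n)))
    (E : Finset (Fin n) → Finset (Fin n) → Prop) (hS : IsSchTree P E)
    (I J K : Finset (Fin n)) (hI : I ∈ P) (hJ : J ∈ P) (hK : K ∈ P)
    (i j k : Fin n) (hiI : i ∈ I) (hjJ : j ∈ J) (hkK : k ∈ K)
    (hij : i < j) (hjk : j < k)
    (hIK : I = K ∨ E I K ∨ E K I) :
    (Relation.ReflTransGen E J I ∨ Relation.ReflTransGen E J K) ∨
    (Relation.ReflTransGen E I J ∨ Relation.ReflTransGen E K J) := by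
  obtain ⟨p, hp⟩ := (hS.2.2.2.1 J hJ I hI).exists_isPath
  by_cases hKp : K ∈ p.support
  · rcases hS.reflTransGen_of_isPath hJ hK hI hp hKp (.inr hiI) hjJ (.inl hkK) hij hjk with
      h | h
    · exact .inl (.inr h)
    · exact .inr (.inr h)
  · have hIK' : I ≠ K := fun h => hKp (h ▸ p.end_mem_support)
    have hadj : (dirGraph E).Adj I K := ⟨hIK', hIK.resolve_left hIK'⟩
    rcases hS.reflTransGen_of_isPath hJ hI hK (hp.concat hKp hadj) (by simp) (.inl hiI) hjJ
      (.inr hkK) hij hjk with h | h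
    · exact .inl (.inl h)
    · exact .inr (.inl h)
end
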